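/- Let P be an orthogonal projection of rank 2 on ℂ² ⊗ ℂ² such that P = A ⊗ B for some 2×2 complex matrices A and B. Then there exists a unit vector φ ∈ ℂ² with P = |φ⟩⟨φ| ⊗ I, or there exists a unit vector ψ ∈ ℂ² with P = I ⊗ |ψ⟩⟨ψ|. -/

import Mathlib

open Kronecker Matrix

/-- The rank-one operator `|v⟩⟨v|`. -/
def outer (v : Fin 2 → ℂ) : Matrix (Fin 2) (Fin 2) ℂ := Matrix.vecMulVec v (star v)

/-!
Idempotence and self-adjointness of `A ⊗ B` pass to its factors once these are rescaled by
reciprocal scalars, since a nonzero Kronecker product determines its factors up to such scalars.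
So `P = E ⊗ F` with `E`, `F` Hermitian idempotents. A 2×2 Hermitian idempotent is `0`, `1` or
`|v⟩⟨v|` with `‖v‖ = 1`: by Cayley–Hamilton a singular nonzero one has trace 1, hence a nonzero
diagonal entry, and its column through that entry, normalised, is `v`. Of the four remaining
products, `1 ⊗ 1` has rank 4 and `|u⟩⟨u| ⊗ |w⟩⟨w| = |u ⊗ w⟩⟨u ⊗ w|` has rank at most 1.
-/

section Kronecker

variable {K : Type*} [Field K] {l m n p : Type*}

theorem exists_smul_of_kronecker_eq {A C : Matrix l m K} {B D : Matrix n p K}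
    (hA : A ≠ 0) (hB : B ≠ 0) (h : A ⊗ₖ B = C ⊗ₖ D) : ∃ μ : K, μ ≠ 0 ∧ C = μ • A ∧ B = μ • D := by
  obtain ⟨i₀, k₀, hA₀⟩ : ∃ i k, A i k ≠ 0 := by simpa [← Matrix.ext_iff] using hA
  obtain ⟨j₀, l₀, hB₀⟩ : ∃ j l, B j l ≠ 0 := by simpa [← Matrix.ext_iff] using hB
  have he : ∀ i k j l, A i k * B j l = C i k * D j l := fun i k j l =>
    congrFun (congrFun h (i, j)) (k, l)
  have hCD₀ : C i₀ k₀ * D j₀ l₀ ≠ 0 := he i₀ k₀ j₀ l₀ ▸ mul_ne_zero hA₀ hB₀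
  refine ⟨C i₀ k₀ / A i₀ k₀, div_ne_zero (left_ne_zero_of_mul hCD₀) hA₀, ?_, ?_⟩
  · ext i k
    apply mul_right_cancel₀ (right_ne_zero_of_mul hCD₀)
    simp only [Matrix.smul_apply, smul_eq_mul]
    field_simp
    linear_combination A i k * he i₀ k₀ j₀ l₀ - A i₀ k₀ * he i k j₀ l₀
  · ext j l
    simp only [Matrix.smul_apply, smul_eq_mul]
    field_simp
    linear_combination he i₀ k₀ j l

theorem eq_one_of_isIdempotentElem_smul {R : Type*} [NonUnitalRing R] [Module K R]
    [IsScalarTower K R R] [SMulCommClass K R R] {F : R} (hF : IsIdempotentElem F) (hF0 : F ≠ 0)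
    {ν : K} (hν : ν ≠ 0) (hνF : IsIdempotentElem (ν • F)) : ν = 1 := by
  have hsq : (ν * ν - ν) • F = 0 := by
    rw [sub_smul, ← hνF.eq, smul_mul_smul_comm, hF.eq, sub_self]
  have hidem : IsIdempotentElem ν := sub_eq_zero.mp ((smul_eq_zero.mp hsq).resolve_right hF0)
  exact (IsIdempotentElem.iff_eq_zero_or_one.mp hidem).resolve_left hν

variable [Fintype n]

theorem exists_isIdempotentElem_kronecker_eq [Fintype m] {A : Matrix m m K} {B : Matrix n n K}
    (hP : IsIdempotentElem (A ⊗ₖ B)) (hP0 : A ⊗ₖ B ≠ 0) :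
    ∃ E F, IsIdempotentElem E ∧ IsIdempotentElem F ∧ A ⊗ₖ B = E ⊗ₖ F := by
  have hA : A ≠ 0 := by rintro rfl; exact hP0 (zero_kronecker B)
  have hB : B ≠ 0 := by rintro rfl; exact hP0 (kronecker_zero A)
  obtain ⟨μ, hμ, hAA, hBB⟩ :=
    exists_smul_of_kronecker_eq hA hB ((mul_kronecker_mul A A B B).trans hP.eq).symm
  refine ⟨μ⁻¹ • A, μ • B, ?_, ?_, ?_⟩
  · rw [IsIdempotentElem, smul_mul_smul_comm, hAA, smul_smul, mul_assoc, inv_mul_cancel₀ hμ,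
      mul_one]
  · rw [IsIdempotentElem, smul_mul_smul_comm, mul_smul, ← hBB]
  · rw [smul_kronecker, kronecker_smul, smul_smul, inv_mul_cancel₀ hμ, one_smul]

theorem isHermitian_of_isHermitian_kronecker [StarRing K] {E : Matrix m m K} {F : Matrix n n K}
    (hE0 : E ≠ 0) (hF : IsIdempotentElem F) (hF0 : F ≠ 0) (hP : (E ⊗ₖ F).IsHermitian) :
    E.IsHermitian ∧ F.IsHermitian := by
  rw [IsHermitian, conjTranspose_kronecker] at hP
  obtain ⟨ν, hν, hE, hF'⟩ :=
    exists_smul_of_kronecker_eq (by simpa using hE0) (by simpa using hF0) hP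
  obtain rfl : ν = 1 :=
    eq_one_of_isIdempotentElem_smul hF hF0 hν (hF' ▸ (hF.star : IsIdempotentElem Fᴴ))
  rw [one_smul] at hE hF'
  exact ⟨hE.symm, hF'⟩

end Kronecker

open scoped ComplexOrder in
theorem exists_vecMulVec_star_of_minors {𝕜 n : Type*} [RCLike 𝕜] [Fintype n]
    {E : Matrix n n 𝕜} (hH : E.IsHermitian) (hI : IsIdempotentElem E) {j : n} (hj : E j j ≠ 0)
    (hminor : ∀ i k, E i j * E j k = E j j * E i k) :
    ∃ v : n → 𝕜, star v ⬝ᵥ v = 1 ∧ E = vecMulVec v (star v) := by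
  set x : n → 𝕜 := fun i => E i j
  have hx : star x ⬝ᵥ x = E j j := calc
    star x ⬝ᵥ x = ∑ i, E j i * E i j :=
      Finset.sum_congr rfl fun i _ => by rw [Pi.star_apply, hH.apply]
    _ = E j j := by rw [← mul_apply, hI.eq]
  obtain ⟨r, hr, hrE⟩ := RCLike.pos_iff_exists_ofReal.mp
    ((dotProduct_star_self_nonneg x).lt_of_ne (hx ▸ hj).symm)
  set s : 𝕜 := (Real.sqrt r : 𝕜)
  have hs : s * s = E j j := by
    rw [← RCLike.ofReal_mul, Real.mul_self_sqrt hr.le, hrE, hx]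
  have hs0 : s ≠ 0 := by rintro h; rw [h, zero_mul] at hs; exact hj hs.symm
  have hss : star s = s := RCLike.conj_ofReal _
  refine ⟨s⁻¹ • x, ?_, ?_⟩
  · rw [star_smul, smul_dotProduct, dotProduct_smul, hx, star_inv₀, hss, smul_smul, ← hs,
      smul_eq_mul]
    field_simp
  · ext i k
    rw [vecMulVec_apply, star_smul, star_inv₀, hss]
    simp only [Pi.smul_apply, Pi.star_apply, smul_eq_mul, x, hH.apply]
    field_simp
    rw [sq, hs, hminor, mul_comm]

theorem mul_self_eq_trace_smul_sub_det_smul_fin_two {R : Type*} [CommRing R]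
    (E : Matrix (Fin 2) (Fin 2) R) : E * E = E.trace • E - E.det • 1 := by
  ext i j
  fin_cases i <;> fin_cases j <;>
    simp [mul_apply, trace_fin_two, det_fin_two, Fin.sum_univ_two] <;> ring

theorem mul_eq_mul_of_det_eq_zero_fin_two {R : Type*} [CommRing R]
    {E : Matrix (Fin 2) (Fin 2) R} (h : E.det = 0) (i j k : Fin 2) :
    E i j * E j k = E j j * E i k := by
  rw [det_fin_two] at h
  fin_cases i <;> fin_cases j <;> fin_cases k <;> simp <;>
    first | ring | linear_combination h | linear_combination -h

theorem Matrix.IsHermitian.eq_one_or_eq_outer_of_isIdempotentElem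
    {E : Matrix (Fin 2) (Fin 2) ℂ} (hH : E.IsHermitian) (hI : IsIdempotentElem E) (hE0 : E ≠ 0) :
    E = 1 ∨ ∃ v, star v ⬝ᵥ v = 1 ∧ E = outer v := by
  by_cases hdet : E.det = 0
  swap
  · exact Or.inl ((IsIdempotentElem.iff_eq_one_of_isUnit
      ((isUnit_iff_isUnit_det E).mpr (isUnit_iff_ne_zero.mpr hdet))).mp hI)
  have htr : E.trace = 1 := by
    have hsq := mul_self_eq_trace_smul_sub_det_smul_fin_two E
    rw [hI.eq, hdet, zero_smul, sub_zero] at hsq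
    have : (E.trace - 1) • E = 0 := by rw [sub_smul, one_smul, ← hsq, sub_self]
    exact sub_eq_zero.mp ((smul_eq_zero.mp this).resolve_right hE0)
  obtain ⟨j, hj⟩ : ∃ j, E j j ≠ 0 := by
    by_contra! h
    rw [trace_fin_two, h 0, h 1, add_zero] at htr
    exact zero_ne_one htr
  exact Or.inr <|
    exists_vecMulVec_star_of_minors hH hI hj (mul_eq_mul_of_det_eq_zero_fin_two hdet · j)

theorem vecMulVec_kronecker_vecMulVec {R l m n p : Type*} [CommSemiring R] (a : l → R)
    (b : m → R) (c : n → R) (d : p → R) :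
    vecMulVec a b ⊗ₖ vecMulVec c d =
      vecMulVec (fun q => a q.1 * c q.2) (fun q => b q.1 * d q.2) := by
  ext ⟨i, j⟩ ⟨k, l⟩
  simp only [kronecker_apply, vecMulVec_apply]
  ring

/-- a rank-2 orthogonal projection on `ℂ² ⊗ ℂ²` of product form `A ⊗ B`
is either `|φ⟩⟨φ| ⊗ I` or `I ⊗ |ψ⟩⟨ψ|` for some unit vector. -/
theorem statement15 (P : Matrix (Fin 2 × Fin 2) (Fin 2 × Fin 2) ℂ)
    (hPadj : Pᴴ = P) (hPP : P * P = P) (hPrank : P.rank = 2)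
    (A B : Matrix (Fin 2) (Fin 2) ℂ) (hAB : P = A ⊗ₖ B) :
    (∃ φv : Fin 2 → ℂ, dotProduct (star φv) φv = 1 ∧
      P = outer φv ⊗ₖ (1 : Matrix (Fin 2) (Fin 2) ℂ)) ∨
    (∃ ψ : Fin 2 → ℂ, dotProduct (star ψ) ψ = 1 ∧
      P = (1 : Matrix (Fin 2) (Fin 2) ℂ) ⊗ₖ outer ψ) := by
  have hP0 : P ≠ 0 := by rintro rfl; simp at hPrank
  subst hAB
  obtain ⟨E, F, hE, hF, hEF⟩ := exists_isIdempotentElem_kronecker_eq hPP hP0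
  rw [hEF] at hPadj hPrank hP0 ⊢
  have hE0 : E ≠ 0 := by rintro rfl; exact hP0 (zero_kronecker F)
  have hF0 : F ≠ 0 := by rintro rfl; exact hP0 (kronecker_zero E)
  obtain ⟨hEH, hFH⟩ : E.IsHermitian ∧ F.IsHermitian :=
    isHermitian_of_isHermitian_kronecker hE0 hF hF0 hPadj
  rcases hEH.eq_one_or_eq_outer_of_isIdempotentElem hE hE0 with rfl | ⟨u, hu, rfl⟩ <;>
    rcases hFH.eq_one_or_eq_outer_of_isIdempotentElem hF hF0 with rfl | ⟨w, hw, rfl⟩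
  · rw [one_kronecker_one, rank_one] at hPrank
    simp at hPrank
  · exact Or.inr ⟨w, hw, rfl⟩
  · exact Or.inl ⟨u, hu, rfl⟩
  · rw [outer, outer, vecMulVec_kronecker_vecMulVec] at hPrank
    have := rank_vecMulVec_le (fun q : Fin 2 × Fin 2 => u q.1 * w q.2)
      fun q : Fin 2 × Fin 2 => star u q.1 * star w q.2
    omega
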